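/- For n ≥ 3, the signless Laplacian spectral radius of Q_n^1 satisfies 2n − 2 < q(Q_n^1) < 2n − 1. -/

import Mathlib

/-!
The signless Laplacian `Q` of `Q_n^1` is a nonnegative symmetric matrix, and both bounds come from
test vectors constant on the four vertex classes: the left vertex of degree `n`, the other `n - 1`
left vertices, the `n - 2` right vertices of degree `n`, and the two pendant right vertices.
For the degree vector `d` one has `Q d < (2n - 1) d` entrywise, which bounds every eigenvalue by a
weighted Gershgorin argument. Halving the weight of the pendant vertices gives a positive `w` with
`Q w ≥ (2n - 2) w`, strictly at the vertex of degree `n`, so the Rayleigh quotient of `w` exceeds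
`2n - 2`.
-/

open SimpleGraph

attribute [local instance] Classical.propDecidable

/-- The (adjacency) spectral radius of a graph, as the largest adjacency eigenvalue. -/
noncomputable def specRad {V : Type*} [Fintype V] [DecidableEq V] (G : SimpleGraph V) : ℝ :=
  sSup (spectrum ℝ (G.adjMatrix ℝ))

/-- The signless Laplacian matrix `Q = D + A` of a graph. -/
noncomputable def signlessLaplacian {V : Type*} [Fintype V] [DecidableEq V]
    (G : SimpleGraph V) : Matrix V V ℝ :=
  Matrix.diagonal (fun v => (G.degree v : ℝ)) + G.adjMatrix ℝ

/-- The signless Laplacian spectral radius of a graph. -/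
noncomputable def qSpec {V : Type*} [Fintype V] [DecidableEq V] (G : SimpleGraph V) : ℝ :=
  sSup (spectrum ℝ (signlessLaplacian G))

/-- A graph is traceable if it has a Hamilton path. -/
def SimpleGraph.IsTraceable {V : Type*} (G : SimpleGraph V) : Prop :=
  ∃ (u v : V) (p : G.Walk u v), p.IsHamiltonian

/-- A graph on `Fin m ⊕ Fin n` is bipartite with bipartition `{Fin m, Fin n}`:
all edges go between the two parts. -/
def CrossOnly {m n : ℕ} (G : SimpleGraph (Fin m ⊕ Fin n)) : Prop :=
  (∀ x y : Fin m, ¬ G.Adj (Sum.inl x) (Sum.inl y)) ∧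
  (∀ x y : Fin n, ¬ G.Adj (Sum.inr x) (Sum.inr y))

/-- The graph `Q_n^k = K_{k,n-k-1} ⊔ Φ_{n-k,k+1}`: a vertex `inl x` with `x < k` is joined to
all of the right side, a vertex `inr y` with `y < n-k-1` is joined to all of the left side,
and there are no other edges. -/
def Qgraph (n k : ℕ) : SimpleGraph (Fin n ⊕ Fin n) :=
  SimpleGraph.fromRel (fun a b =>
    match a, b with
    | Sum.inl x, Sum.inr y => x.val < k ∨ y.val < n - k - 1
    | _, _ => False)

/-- The graph `R_n^k = K_{k,k} ∪ K_{n-k,n-k}` (disjoint union). -/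
def Rgraph (n k : ℕ) : SimpleGraph (Fin n ⊕ Fin n) :=
  SimpleGraph.fromRel (fun a b =>
    match a, b with
    | Sum.inl x, Sum.inr y => (x.val < k ∧ y.val < k) ∨ (k ≤ x.val ∧ k ≤ y.val)
    | _, _ => False)

/-- The graph `S_n^k = K_{k,n-k-1} ⊔ Φ_{n-k,k}` on parts of sizes `n` and `n-1`. -/
def Sgraph (n k : ℕ) : SimpleGraph (Fin n ⊕ Fin (n - 1)) :=
  SimpleGraph.fromRel (fun a b =>
    match a, b with
    | Sum.inl x, Sum.inr y => x.val < k ∨ y.val < n - k - 1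
    | _, _ => False)

/-- The quasi-complement of a bipartite graph: `inl x` and `inr y` are adjacent iff they are
nonadjacent in `G`; no edges inside the parts. -/
def quasiComplement {m n : ℕ} (G : SimpleGraph (Fin m ⊕ Fin n)) : SimpleGraph (Fin m ⊕ Fin n) :=
  SimpleGraph.fromRel (fun a b =>
    match a, b with
    | Sum.inl x, Sum.inr y => ¬ G.Adj (Sum.inl x) (Sum.inr y)
    | _, _ => False)

/-- `G` is isomorphic to a subgraph of `H`. -/
def IsoSubgraph {V W : Type*} (G : SimpleGraph V) (H : SimpleGraph W) : Prop :=
  ∃ H' : SimpleGraph W, H' ≤ H ∧ Nonempty (G ≃g H')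

open Matrix Finset

section Spectrum
variable {V : Type*} [Fintype V] [DecidableEq V]

theorem Matrix.exists_mulVec_eq_smul_of_mem_spectrum {A : Matrix V V ℝ} {μ : ℝ}
    (hμ : μ ∈ spectrum ℝ A) : ∃ x : V → ℝ, x ≠ 0 ∧ A *ᵥ x = μ • x := by
  rw [← spectrum_toLin', ← Module.End.hasEigenvalue_iff_mem_spectrum] at hμ
  obtain ⟨x, hx⟩ := hμ.exists_hasEigenvector
  exact ⟨x, hx.2, by simpa using Module.End.mem_eigenspace_iff.1 hx.1⟩

/-- Weighted Gershgorin bound: evaluate the eigenvector equation where `|x u| / w u` is maximal. -/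
theorem Matrix.lt_of_mem_spectrum_of_mulVec_lt {A : Matrix V V ℝ} (hA : ∀ u v, 0 ≤ A u v)
    {w : V → ℝ} (hw : ∀ v, 0 < w v) {c : ℝ} (h : ∀ v, (A *ᵥ w) v < c * w v) {μ : ℝ}
    (hμ : μ ∈ spectrum ℝ A) : μ < c := by
  obtain ⟨x, hx0, hx⟩ := exists_mulVec_eq_smul_of_mem_spectrum hμ
  obtain ⟨u, hu⟩ := Function.ne_iff.1 hx0
  obtain ⟨v, -, hv⟩ := exists_max_image univ (fun u => |x u| / w u) ⟨u, mem_univ u⟩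
  set t := |x v| / w v
  have hbound : ∀ u, |x u| ≤ t * w u := fun u =>
    (div_le_iff₀ (hw u)).1 (hv u (mem_univ u))
  have ht : 0 < t := (div_pos (abs_pos.2 hu) (hw u)).trans_le (hv u (mem_univ u))
  have hxv : |x v| = t * w v := by rw [div_mul_cancel₀ _ (hw v).ne']
  have key : |μ| * |x v| < c * |x v| := calc
    |μ| * |x v| = |∑ u, A v u * x u| := by
        rw [← abs_mul, ← smul_eq_mul, ← Pi.smul_apply, ← hx]; rfl
    _ ≤ ∑ u, A v u * (t * w u) := by
        refine (abs_sum_le_sum_abs _ _).trans (sum_le_sum fun u _ => ?_)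
        rw [abs_mul, abs_of_nonneg (hA v u)]
        exact mul_le_mul_of_nonneg_left (hbound u) (hA v u)
    _ = t * (A *ᵥ w) v := by
        simp only [mulVec, dotProduct, mul_sum]
        exact sum_congr rfl fun u _ => by ring
    _ < t * (c * w v) := mul_lt_mul_of_pos_left (h v) ht
    _ = c * |x v| := by rw [hxv]; ring
  have hxv_pos : 0 < |x v| := by rw [hxv]; exact mul_pos ht (hw v)
  exact (le_abs_self μ).trans_lt (lt_of_mul_lt_mul_right key hxv_pos.le)

theorem Matrix.sSup_spectrum_lt_of_mulVec_lt [Nonempty V] {A : Matrix V V ℝ}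
    (hA : ∀ u v, 0 ≤ A u v) {w : V → ℝ} (hw : ∀ v, 0 < w v) {c : ℝ}
    (h : ∀ v, (A *ᵥ w) v < c * w v) : sSup (spectrum ℝ A) < c := by
  rcases (spectrum ℝ A).eq_empty_or_nonempty with hempty | hne
  · obtain ⟨v⟩ := ‹Nonempty V›
    have hAw : 0 ≤ (A *ᵥ w) v := sum_nonneg fun u _ => mul_nonneg (hA v u) (hw u).le
    rw [hempty, Real.sSup_empty]
    exact pos_of_mul_pos_left (hAw.trans_lt (h v)) (hw v).le
  · exact lt_of_mem_spectrum_of_mulVec_lt hA hw h (hne.csSup_mem (finite_spectrum A))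

theorem Matrix.IsHermitian.dotProduct_mulVec_le_sSup_spectrum {A : Matrix V V ℝ}
    (hA : A.IsHermitian) (x : V → ℝ) :
    x ⬝ᵥ (A *ᵥ x) ≤ sSup (spectrum ℝ A) * (x ⬝ᵥ x) := by
  set c := sSup (spectrum ℝ A)
  have hpsd : (algebraMap ℝ (Matrix V V ℝ) c - A).PosSemidef := by
    rw [posSemidef_iff_isHermitian_and_spectrum_nonneg]
    refine ⟨(isHermitian_diagonal _).sub hA, ?_⟩
    rw [← spectrum.singleton_sub_eq]
    rintro _ ⟨_, rfl, μ, hμ, rfl⟩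
    exact sub_nonneg.2 (le_csSup (finite_spectrum A).bddAbove hμ)
  have := hpsd.dotProduct_mulVec_nonneg x
  rw [Algebra.algebraMap_eq_smul_one, sub_mulVec, smul_mulVec, one_mulVec, star_trivial,
    dotProduct_sub, dotProduct_smul, smul_eq_mul] at this
  linarith

theorem Matrix.IsHermitian.lt_sSup_spectrum_of_le_mulVec {A : Matrix V V ℝ} (hA : A.IsHermitian)
    {w : V → ℝ} (hw : ∀ v, 0 < w v) {c : ℝ} (hle : ∀ v, c * w v ≤ (A *ᵥ w) v)
    (hlt : ∃ v, c * w v < (A *ᵥ w) v) : c < sSup (spectrum ℝ A) := by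
  obtain ⟨v, hv⟩ := hlt
  have hform : c * (w ⬝ᵥ w) < w ⬝ᵥ (A *ᵥ w) := by
    simp only [dotProduct, mul_sum]
    refine sum_lt_sum (fun u _ => ?_) ⟨v, mem_univ v, ?_⟩
    · nlinarith [hle u, hw u]
    · nlinarith [hv, hw v]
  have hww : 0 ≤ w ⬝ᵥ w := sum_nonneg fun u _ => mul_self_nonneg (w u)
  exact lt_of_mul_lt_mul_right (hform.trans_le (hA.dotProduct_mulVec_le_sSup_spectrum w)) hww

end Spectrum

section SignlessLaplacian
variable {V : Type*} [Fintype V] [DecidableEq V] (G : SimpleGraph V)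

theorem signlessLaplacian_isHermitian : (signlessLaplacian G).IsHermitian :=
  (isHermitian_diagonal _).add (G.isHermitian_adjMatrix ℝ)

theorem signlessLaplacian_nonneg (u v : V) : 0 ≤ signlessLaplacian G u v := by
  rw [signlessLaplacian, Matrix.add_apply, diagonal_apply, adjMatrix_apply]
  positivity

theorem signlessLaplacian_mulVec_apply (w : V → ℝ) (v : V) :
    (signlessLaplacian G *ᵥ w) v = ∑ u ∈ G.neighborFinset v, (w v + w u) := by
  rw [signlessLaplacian, add_mulVec, Pi.add_apply, mulVec_diagonal, adjMatrix_mulVec_apply,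
    sum_add_distrib, sum_const, card_neighborFinset_eq_degree, nsmul_eq_mul]

end SignlessLaplacian

theorem Fin.sum_ite_val_lt {n m : ℕ} (hm : m ≤ n) (a b : ℝ) :
    ∑ j : Fin n, (if (j : ℕ) < m then a else b) = m * a + (n - m) * b := by
  have hlt := Fin.card_filter_val_lt (n := n) (m := m)
  have hcompl := card_filter_add_card_filter_not (s := (univ : Finset (Fin n)))
    (fun j : Fin n => (j : ℕ) < m)
  rw [sum_ite]
  simp only [Finset.sum_const, nsmul_eq_mul, not_lt, card_univ, Fintype.card_fin] at hcompl ⊢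
  rw [min_eq_right hm] at hlt
  rw [hlt, show #{j : Fin n | m ≤ (j : ℕ)} = n - m by omega, Nat.cast_sub hm]

section Qgraph
variable {n : ℕ}

theorem Qgraph_one_neighborFinset_inl (i : Fin n) :
    (Qgraph n 1).neighborFinset (.inl i) =
      ({j | (i : ℕ) < 1 ∨ (j : ℕ) < n - 2} : Finset (Fin n)).map .inr := by
  ext (u | u) <;> rw [mem_neighborFinset] <;> simp [Qgraph, Nat.sub_sub]

theorem Qgraph_one_neighborFinset_inr (j : Fin n) :
    (Qgraph n 1).neighborFinset (.inr j) =
      ({i | (i : ℕ) < 1 ∨ (j : ℕ) < n - 2} : Finset (Fin n)).map .inl := by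
  ext (u | u) <;> rw [mem_neighborFinset] <;> simp [Qgraph, Nat.sub_sub]

/-- Constant on the four vertex classes of `Q_n^1`; for `e = 1` it is the degree vector. -/
def qgraphWeight (n : ℕ) (e : ℝ) : Fin n ⊕ Fin n → ℝ :=
  Sum.elim (fun i => if (i : ℕ) < 1 then n else n - 2)
    (fun j => if (j : ℕ) < n - 2 then n else e)

theorem qgraphWeight_pos (hn : 3 ≤ n) {e : ℝ} (he : 0 < e) (v : Fin n ⊕ Fin n) :
    0 < qgraphWeight n e v := by
  have : (3 : ℝ) ≤ n := by exact_mod_cast hn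
  rcases v with i | j <;> simp only [qgraphWeight, Sum.elim_inl, Sum.elim_inr] <;> split_ifs <;>
    linarith

theorem signlessLaplacian_Qgraph_one_mulVec_weight_inl (hn : 2 ≤ n) (e : ℝ) (i : Fin n) :
    (signlessLaplacian (Qgraph n 1) *ᵥ qgraphWeight n e) (.inl i) =
      (if (i : ℕ) < 1 then 2 * n ^ 2 - 2 * n + 2 * e else (n - 2) * (2 * n - 2) : ℝ) := by
  rw [signlessLaplacian_mulVec_apply, Qgraph_one_neighborFinset_inl, sum_map, sum_filter]
  split_ifs with hi <;>
    simp +contextual only [qgraphWeight, hi, Sum.elim_inl, Sum.elim_inr,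
      Function.Embedding.inr_apply, if_true, if_false, true_or, false_or, add_ite] <;>
    rw [Fin.sum_ite_val_lt (by omega)] <;> push_cast [Nat.cast_sub hn] <;> ring

theorem signlessLaplacian_Qgraph_one_mulVec_weight_inr (hn : 2 ≤ n) (e : ℝ) (j : Fin n) :
    (signlessLaplacian (Qgraph n 1) *ᵥ qgraphWeight n e) (.inr j) =
      (if (j : ℕ) < n - 2 then 2 * n ^ 2 - 2 * n + 2 else n + e : ℝ) := by
  rw [signlessLaplacian_mulVec_apply, Qgraph_one_neighborFinset_inr, sum_map, sum_filter]
  split_ifs with hj <;>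
    simp +contextual only [qgraphWeight, hj, Sum.elim_inl, Sum.elim_inr,
      Function.Embedding.inl_apply, if_true, if_false, or_true, or_false, add_ite] <;>
    rw [Fin.sum_ite_val_lt (by omega)] <;> push_cast [Nat.cast_sub hn] <;> ring

theorem signlessLaplacian_Qgraph_one_mulVec_weight_one_lt (hn : 3 ≤ n) (v : Fin n ⊕ Fin n) :
    (signlessLaplacian (Qgraph n 1) *ᵥ qgraphWeight n 1) v <
      (2 * n - 1) * qgraphWeight n 1 v := by
  have : (3 : ℝ) ≤ n := by exact_mod_cast hn
  rcases v with i | j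
  · rw [signlessLaplacian_Qgraph_one_mulVec_weight_inl (by omega)]
    simp only [qgraphWeight, Sum.elim_inl]
    split_ifs <;> nlinarith
  · rw [signlessLaplacian_Qgraph_one_mulVec_weight_inr (by omega)]
    simp only [qgraphWeight, Sum.elim_inr]
    split_ifs <;> nlinarith

theorem le_signlessLaplacian_Qgraph_one_mulVec_weight_half (hn : 3 ≤ n) (v : Fin n ⊕ Fin n) :
    (2 * n - 2) * qgraphWeight n (1 / 2) v ≤
      (signlessLaplacian (Qgraph n 1) *ᵥ qgraphWeight n (1 / 2)) v := by
  have : (3 : ℝ) ≤ n := by exact_mod_cast hn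
  rcases v with i | j
  · rw [signlessLaplacian_Qgraph_one_mulVec_weight_inl (by omega)]
    simp only [qgraphWeight, Sum.elim_inl]
    split_ifs <;> nlinarith
  · rw [signlessLaplacian_Qgraph_one_mulVec_weight_inr (by omega)]
    simp only [qgraphWeight, Sum.elim_inr]
    split_ifs <;> nlinarith

end Qgraph

/-- For `n ≥ 3`, `2n - 2 < q(Q_n^1) < 2n - 1`. -/
theorem stmt_10 (n : ℕ) (hn : 3 ≤ n) :
    2 * (n : ℝ) - 2 < qSpec (Qgraph n 1) ∧ qSpec (Qgraph n 1) < 2 * (n : ℝ) - 1 := by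
  have : Nonempty (Fin n ⊕ Fin n) := ⟨.inl ⟨0, by omega⟩⟩
  constructor
  · refine (signlessLaplacian_isHermitian _).lt_sSup_spectrum_of_le_mulVec
      (qgraphWeight_pos hn one_half_pos) (le_signlessLaplacian_Qgraph_one_mulVec_weight_half hn)
      ⟨.inl ⟨0, by omega⟩, ?_⟩
    rw [signlessLaplacian_Qgraph_one_mulVec_weight_inl (by omega)]
    simp only [qgraphWeight, Sum.elim_inl, zero_lt_one, if_true]
    nlinarith
  · exact sSup_spectrum_lt_of_mulVec_lt (signlessLaplacian_nonneg _) (qgraphWeight_pos hn one_pos)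
      (signlessLaplacian_Qgraph_one_mulVec_weight_one_lt hn)
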